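/- arXiv:1808.10443 — 2 statements merged into one kernel-verified Lean document; each statement's English description precedes it below -/
import Mathlib

section
/- If G is a graph with an odd number of vertices (at least 3) and v is a vertex of minimum degree, then mp(G) ≤ δ(G) + δ(G − v). -/
open SimpleGraph

/-- An almost-perfect matching: a matching covering all vertices except exactly one. -/
def SimpleGraph.Subgraph.IsAlmostPerfectMatching {V : Type*} {G : SimpleGraph V}
    (M : G.Subgraph) : Prop :=
  M.IsMatching ∧ ∃ v : V, M.verts = {v}ᶜ

/-- `G` has a perfect matching or an almost-perfect matching. -/
def SimpleGraph.HasGoodMatching {V : Type*} (G : SimpleGraph V) : Prop :=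
  (∃ M : G.Subgraph, M.IsPerfectMatching) ∨ (∃ M : G.Subgraph, M.IsAlmostPerfectMatching)

/-- The matching preclusion number of `G`. -/
noncomputable def SimpleGraph.mp {V : Type*} [Fintype V] (G : SimpleGraph V) : ℕ :=
  sInf { k | ∃ F : Finset (Sym2 V), ↑F ⊆ G.edgeSet ∧ F.card = k ∧
    ¬ (G.deleteEdges ↑F).HasGoodMatching }

/-!
Delete every edge at `v` and every edge at a vertex `u ≠ v` of minimum degree in `G - v`.
By inclusion–exclusion these are `deg v + deg u - [uv ∈ E(G)] = δ(G) + δ(G - v)` edges, and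
afterwards `u` and `v` are two isolated vertices, whereas a perfect or almost-perfect matching
misses at most one vertex.
-/

namespace SimpleGraph

open Finset

variable {V : Type*} {G : SimpleGraph V}

theorem Subgraph.IsMatching.notMem_verts_of_isolated {M : G.Subgraph} (hM : M.IsMatching)
    {x : V} (hx : ∀ w, ¬ G.Adj x w) : x ∉ M.verts := fun hxM ↦
  let ⟨w, hw, _⟩ := hM hxM
  hx w (M.adj_sub hw)

theorem not_hasGoodMatching_of_isolated {u v : V} (huv : u ≠ v)
    (hu : ∀ w, ¬ G.Adj u w) (hv : ∀ w, ¬ G.Adj v w) : ¬ G.HasGoodMatching := by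
  rintro (⟨M, hM, hspan⟩ | ⟨M, hM, x, hx⟩)
  · exact hM.notMem_verts_of_isolated hv (hspan v)
  · have hux : u = x := by
      simpa [hx] using hM.notMem_verts_of_isolated hu
    have hvx : v = x := by
      simpa [hx] using hM.notMem_verts_of_isolated hv
    exact huv (hux.trans hvx.symm)

theorem not_adj_deleteEdges_of_incidenceSet_subset {s : Set (Sym2 V)} {v : V}
    (h : G.incidenceSet v ⊆ s) (w : V) : ¬ (G.deleteEdges s).Adj v w := by
  rw [deleteEdges_adj]
  exact fun ⟨hadj, hnot⟩ ↦ hnot (h (G.mk'_mem_incidenceSet_left_iff.2 hadj))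

theorem mp_le_card [Fintype V] {F : Finset (Sym2 V)} (hF : ↑F ⊆ G.edgeSet)
    (h : ¬ (G.deleteEdges ↑F).HasGoodMatching) : G.mp ≤ F.card :=
  Nat.sInf_le ⟨F, hF, rfl, h⟩

variable [Fintype V] [DecidableEq V] [DecidableRel G.Adj]

theorem card_incidenceFinset_inter {u v : V} (huv : u ≠ v) :
    #(G.incidenceFinset u ∩ G.incidenceFinset v) = if G.Adj u v then 1 else 0 := by
  split_ifs with hadj
  · rw [card_eq_one]
    refine ⟨s(u, v), coe_injective ?_⟩
    simpa using G.incidenceSet_inter_incidenceSet_of_adj hadj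
  · rw [card_eq_zero, ← coe_eq_empty]
    simpa using G.incidenceSet_inter_incidenceSet_of_not_adj hadj huv

theorem degree_induce_compl_singleton_add {u v : V} (huv : u ≠ v) :
    (G.induce {v}ᶜ).degree ⟨u, huv⟩ + (if G.Adj u v then 1 else 0) = G.degree u := by
  have hneighbors : (G.induce {v}ᶜ).degree ⟨u, huv⟩ = #((G.neighborFinset u).erase v) := by
    rw [← card_neighborFinset_eq_degree, ← card_map, map_neighborFinset_induce]
    congr 1
    ext w
    simp [and_comm]
  rw [hneighbors, ← card_neighborFinset_eq_degree]
  split_ifs with hadj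
  · exact card_erase_add_one ((G.mem_neighborFinset u v).2 hadj)
  · rw [erase_eq_of_notMem (by simpa using hadj), add_zero]

theorem card_incidenceFinset_union {u v : V} (huv : u ≠ v) :
    #(G.incidenceFinset v ∪ G.incidenceFinset u) =
      G.degree v + (G.induce {v}ᶜ).degree ⟨u, huv⟩ := by
  have hunion := card_union_add_card_inter (G.incidenceFinset v) (G.incidenceFinset u)
  rw [inter_comm, card_incidenceFinset_inter huv, card_incidenceFinset_eq_degree,
    card_incidenceFinset_eq_degree, ← degree_induce_compl_singleton_add huv] at hunion
  omega

theorem mp_le_degree_add_degree_induce_compl_singleton {u v : V} (huv : u ≠ v) :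
    G.mp ≤ G.degree v + (G.induce {v}ᶜ).degree ⟨u, huv⟩ := by
  rw [← card_incidenceFinset_union huv]
  refine mp_le_card ?_ (not_hasGoodMatching_of_isolated huv ?_ ?_)
  · simpa using Set.union_subset (G.incidenceSet_subset v) (G.incidenceSet_subset u)
  · exact not_adj_deleteEdges_of_incidenceSet_subset (by simp)
  · exact not_adj_deleteEdges_of_incidenceSet_subset (by simp)

end SimpleGraph

theorem stmt4_general {V : Type*} [Fintype V] [DecidableEq V] (G : SimpleGraph V)
    [DecidableRel G.Adj] (h3 : 3 ≤ Fintype.card V)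
    (v : V) (hv : G.degree v = G.minDegree) :
    G.mp ≤ G.minDegree + (G.induce ({v}ᶜ : Set V)).minDegree := by
  obtain ⟨w, hwv⟩ := Fintype.exists_ne_of_one_lt_card (by omega) v
  have : Nonempty ({v}ᶜ : Set V) := ⟨⟨w, hwv⟩⟩
  obtain ⟨⟨u, huv⟩, hu⟩ := (G.induce ({v}ᶜ : Set V)).exists_minimal_degree_vertex
  rw [← hv, hu]
  exact G.mp_le_degree_add_degree_induce_compl_singleton huv

theorem stmt4 {V : Type*} [Fintype V] [DecidableEq V] (G : SimpleGraph V)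
    [DecidableRel G.Adj] (hodd : Odd (Fintype.card V)) (h3 : 3 ≤ Fintype.card V)
    (v : V) (hv : G.degree v = G.minDegree) :
    G.mp ≤ G.minDegree + (G.induce ({v}ᶜ : Set V)).minDegree :=
  stmt4_general G h3 v hv
end

section
/- Let G be a graph with an even number n ≥ 2 of vertices. Then mp(G) = n − 1 if and only if G is the complete graph K_n. -/
/-!
Deleting the `deg v` edges at a vertex `v` isolates it, so `mp G ≤ δ(G) ≤ n - 1`, with equality
throughout only if every vertex is universal. Conversely, since `n` is even an almost-perfect
matching cannot exist, and `K_n` splits into `n - 1` edge-disjoint perfect matchings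
(the round-robin 1-factorization). A set of at most `n - 2` edges misses one of them, hence
`mp K_n = n - 1`.
-/

open SimpleGraph

section RoundRobin

variable {R : Type*} [CommRing R]

/-- On `Option R`, with `none` playing the point at infinity, the `i`-th round-robin matching pairs
`none` with `i` and `a` with `2 * i - a`; the edge `{a, b}` therefore lies in the matching of
index `(a + b) / 2`, and `{none, b}` in that of index `b`. Loops get the junk value `0`. -/
def roundRobinColorPair [Invertible (2 : R)] : Option R → Option R → R
  | none, none => 0
  | none, some b => b
  | some a, none => a
  | some a, some b => ⅟2 * (a + b)

lemma roundRobinColorPair_comm [Invertible (2 : R)] (x y : Option R) :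
    roundRobinColorPair x y = roundRobinColorPair y x := by
  cases x <;> cases y <;> simp only [roundRobinColorPair, add_comm]

def roundRobinColor [Invertible (2 : R)] : Sym2 (Option R) → R :=
  Sym2.lift ⟨roundRobinColorPair, roundRobinColorPair_comm⟩

variable [DecidableEq R]

def roundRobin (i : R) : Option R → Option R
  | none => some i
  | some a => if a = i then none else some (2 * i - a)

lemma roundRobin_involutive (i : R) : Function.Involutive (roundRobin i) := by
  rintro (_ | a)
  · simp [roundRobin]
  · by_cases h : a = i
    · simp [roundRobin, h]
    · have : 2 * i - a ≠ i := fun h' => h (by linear_combination -h')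
      simp [roundRobin, h, this]

variable [Invertible (2 : R)]

lemma roundRobin_ne_self (i : R) (x : Option R) : roundRobin i x ≠ x := by
  rcases x with _ | a
  · simp [roundRobin]
  · by_cases h : a = i
    · simp [roundRobin, h]
    · have h2a : (2 : R) * a ≠ 2 * i := fun h' => h ((isUnit_of_invertible 2).mul_left_cancel h')
      simp only [roundRobin, h, if_false, ne_eq, Option.some.injEq]
      exact fun h' => h2a (by linear_combination -h')

lemma roundRobinColor_mk_roundRobin (i : R) (x : Option R) :
    roundRobinColor s(x, roundRobin i x) = i := by
  rcases x with _ | a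
  · simp [roundRobinColor, roundRobin, roundRobinColorPair]
  · by_cases h : a = i <;> simp [roundRobinColor, roundRobin, roundRobinColorPair, h]

end RoundRobin

namespace SimpleGraph

variable {V : Type*} {G : SimpleGraph V}

lemma Subgraph.IsAlmostPerfectMatching.odd_card [Fintype V] {M : G.Subgraph}
    (hM : M.IsAlmostPerfectMatching) : Odd (Fintype.card V) := by
  classical
  obtain ⟨hmatch, v, hv⟩ := hM
  have heven := hmatch.even_card
  simp only [hv, Set.toFinset_compl, Set.toFinset_singleton, Finset.card_compl,
    Finset.card_singleton] at heven
  have hpos : 0 < Fintype.card V := Fintype.card_pos_iff.mpr ⟨v⟩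
  rw [Nat.even_sub hpos] at heven
  simpa using heven

lemma hasGoodMatching_iff_of_even_card [Fintype V] (hn : Even (Fintype.card V)) :
    G.HasGoodMatching ↔ ∃ M : G.Subgraph, M.IsPerfectMatching :=
  or_iff_left fun ⟨_, hM⟩ => Nat.not_odd_iff_even.mpr hn hM.odd_card

lemma exists_isPerfectMatching_of_involutive {σ : V → V} (hσ : Function.Involutive σ)
    (hadj : ∀ v, G.Adj v (σ v)) : ∃ M : G.Subgraph, M.IsPerfectMatching := by
  let M : G.Subgraph :=
    { verts := Set.univ
      Adj := fun v w => w = σ v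
      adj_sub := by rintro v _ rfl; exact hadj v
      edge_vert := fun _ => Set.mem_univ _
      symm := ⟨fun v w h => by rw [h, hσ]⟩ }
  exact ⟨M, Subgraph.isPerfectMatching_iff.mpr fun v => ⟨σ v, rfl, fun _ h => h⟩⟩

lemma not_exists_isPerfectMatching_deleteEdges_incidenceSet (v : V) :
    ¬ ∃ M : (G.deleteEdges (G.incidenceSet v)).Subgraph, M.IsPerfectMatching := by
  rintro ⟨M, hM⟩
  obtain ⟨w, hvw, -⟩ := hM.1 (hM.2 v)
  obtain ⟨hG, hnotin⟩ := deleteEdges_adj.mp (M.adj_sub hvw)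
  exact hnotin (G.mk'_mem_incidenceSet_left_iff.mpr hG)

lemma exists_isPerfectMatching_top_deleteEdges [Fintype V] (hn : Even (Fintype.card V))
    (F : Finset (Sym2 V)) (hF : F.card + 2 ≤ Fintype.card V) :
    ∃ M : ((⊤ : SimpleGraph V).deleteEdges F).Subgraph, M.IsPerfectMatching := by
  classical
  set q := Fintype.card V - 1
  have : NeZero q := ⟨by omega⟩
  have hq : Odd q := Nat.Even.sub_odd (by omega) hn odd_one
  have : Invertible (2 : ZMod q) :=
    IsUnit.invertible (by exact_mod_cast (ZMod.isUnit_iff_coprime 2 q).mpr (Nat.coprime_two_left.mpr hq))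
  let e : V ≃ Option (ZMod q) := Fintype.equivOfCardEq (by simp [ZMod.card, q]; omega)
  obtain ⟨i, -, hi⟩ := Finset.exists_mem_notMem_of_card_lt_card
    (s := F.image fun s => roundRobinColor (s.map e)) (t := Finset.univ)
    (by rw [Finset.card_univ, ZMod.card]; exact Finset.card_image_le.trans_lt (by omega))
  refine exists_isPerfectMatching_of_involutive (σ := fun v => e.symm (roundRobin i (e v)))
    (fun v => by simp [roundRobin_involutive i (e v)]) fun v => deleteEdges_adj.mpr ⟨?_, ?_⟩
  · refine fun h => roundRobin_ne_self i (e v) ?_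
    simpa using congrArg e h.symm
  · refine fun hv => hi (Finset.mem_image.mpr ⟨_, hv, ?_⟩)
    simp [roundRobinColor_mk_roundRobin]

variable [Fintype V]

lemma exists_card_eq_degree_not_hasGoodMatching [DecidableRel G.Adj]
    (hn : Even (Fintype.card V)) (v : V) :
    ∃ F : Finset (Sym2 V), ↑F ⊆ G.edgeSet ∧ F.card = G.degree v ∧
      ¬ (G.deleteEdges ↑F).HasGoodMatching := by
  classical
  refine ⟨G.incidenceFinset v, ?_, G.card_incidenceFinset_eq_degree v, ?_⟩
  · simpa only [coe_incidenceFinset] using G.incidenceSet_subset v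
  · simpa only [coe_incidenceFinset, hasGoodMatching_iff_of_even_card hn]
      using not_exists_isPerfectMatching_deleteEdges_incidenceSet v

lemma mp_le_degree [DecidableRel G.Adj] (hn : Even (Fintype.card V)) (v : V) :
    G.mp ≤ G.degree v :=
  Nat.sInf_le (exists_card_eq_degree_not_hasGoodMatching hn v)

lemma mp_top (hn : Even (Fintype.card V)) (h2 : 2 ≤ Fintype.card V) :
    (⊤ : SimpleGraph V).mp = Fintype.card V - 1 := by
  classical
  obtain ⟨v⟩ : Nonempty V := Fintype.card_pos_iff.mp (by omega)
  refine le_antisymm ((mp_le_degree hn v).trans_eq (complete_graph_degree v)) ?_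
  refine le_csInf ⟨_, exists_card_eq_degree_not_hasGoodMatching hn v⟩ ?_
  rintro _ ⟨F, -, rfl, hF⟩
  by_contra! hlt
  exact hF <| (hasGoodMatching_iff_of_even_card hn).mpr <|
    exists_isPerfectMatching_top_deleteEdges hn F (by omega)

end SimpleGraph

theorem stmt8 {V : Type*} [Fintype V] (G : SimpleGraph V)
    (hn : Even (Fintype.card V)) (h2 : 2 ≤ Fintype.card V) :
    G.mp = Fintype.card V - 1 ↔ G = ⊤ := by
  classical
  refine ⟨fun hmp => eq_top_iff_forall_isUniversal.mpr fun v => ?_, fun hG => hG ▸ mp_top hn h2⟩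
  exact (G.degree_eq_card_sub_one v).mp <|
    le_antisymm (Nat.le_sub_one_of_lt (G.degree_lt_card_verts v)) (hmp ▸ mp_le_degree hn v)
end
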